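/- Let {G_N} be a family of connected weighted undirected graphs with degrees at most q and edge weights at most w_max, and fix gains a₀, a₁, a₂ > 0. For the grounded (leader-follower) third-order consensus dynamics over G_N, stability requires λ̄₁(G_N) > a₀/(a₁a₂). Since λ̄₁(G_N) ≤ q·w_max/(N−1), the grounded system is unstable for all N > 1 + q·w_max·a₁a₂/a₀. -/

import Mathlib

/-!
If the closed loop is Hurwitz and `u` is an eigenvector of the grounded Laplacian for `λ̄₁`, every
root `s` of `s³ + a₂λ̄₁s² + a₁λ̄₁s + a₀λ̄₁` is an eigenvalue of the closed-loop matrix, with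
eigenvector `(u, su, s²u)`. So this cubic is Hurwitz, and the necessary Routh–Hurwitz conditions
give `a₁a₂λ̄₁ > a₀`; they follow by splitting off a real root `r < 0` and writing the cubic as
`(s - r)(s² + βs + γ)` with `β, γ > 0`. On the other hand, the Rayleigh quotient of the all-ones
vector bounds `λ̄₁ (N - 1)` by the weighted degree of the leader, which is at most `q w_max`.
-/

open Matrix

/-- Sorted (ascending) eigenvalues of a Hermitian matrix. -/
noncomputable def sortedEig {N : ℕ} {L : Matrix (Fin N) (Fin N) ℝ}
    (hL : L.IsHermitian) : Fin N → ℝ :=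
  hL.eigenvalues ∘ Tuple.sort hL.eigenvalues

/-- Weighted graph Laplacian. -/
noncomputable def lap {N : ℕ} (w : Fin N → Fin N → ℝ) : Matrix (Fin N) (Fin N) ℝ :=
  Matrix.of fun i j => if i = j then ∑ k, w i k else - w i j

/-- The closed-loop matrix A = [[0, I, 0], [0, 0, I], [−a₀L, −a₁L, −a₂L]] of
third-order consensus, indexed by Fin 3 × Fin N. -/
noncomputable def thirdA {N : ℕ} (a₀ a₁ a₂ : ℝ) (L : Matrix (Fin N) (Fin N) ℝ) :
    Matrix (Fin 3 × Fin N) (Fin 3 × Fin N) ℝ :=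
  Matrix.of fun p q =>
    if p.1 = 0 ∧ q.1 = 1 then (if p.2 = q.2 then 1 else 0)
    else if p.1 = 1 ∧ q.1 = 2 then (if p.2 = q.2 then 1 else 0)
    else if p.1 = 2 ∧ q.1 = 0 then -a₀ * L p.2 q.2
    else if p.1 = 2 ∧ q.1 = 1 then -a₁ * L p.2 q.2
    else if p.1 = 2 ∧ q.1 = 2 then -a₂ * L p.2 q.2
    else 0

lemma exists_cubic_eq_zero (b c d : ℝ) : ∃ r : ℝ, r ^ 3 + b * r ^ 2 + c * r + d = 0 := by
  -- `±K` dominate the lower-order terms, so the cubic changes sign on `[-K, K]`.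
  set K := 1 + |b| + |c| + |d|
  have hK : 1 ≤ K := by
    have := abs_nonneg b; have := abs_nonneg c; have := abs_nonneg d; linarith
  have hcont : ContinuousOn (fun x : ℝ => x ^ 3 + b * x ^ 2 + c * x + d) (Set.Icc (-K) K) := by
    fun_prop
  have hsign : (0 : ℝ) ∈ Set.Icc ((-K) ^ 3 + b * (-K) ^ 2 + c * (-K) + d)
      (K ^ 3 + b * K ^ 2 + c * K + d) := by
    have := neg_abs_le b; have := le_abs_self b
    have := neg_abs_le c; have := le_abs_self c
    have := neg_abs_le d; have := le_abs_self d
    constructor <;> nlinarith [sq_nonneg K, sq_nonneg (K - 1)]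
  obtain ⟨r, -, hr⟩ := intermediate_value_Icc (by linarith) hcont hsign
  exact ⟨r, hr⟩

lemma quadratic_coeffs_pos_of_forall_root_re_neg (β γ : ℝ)
    (h : ∀ z : ℂ, z ^ 2 + β * z + γ = 0 → z.re < 0) : 0 < β ∧ 0 < γ := by
  -- Vieta: with `z`, also `-β - z` is a root.
  have hpair : ∀ z : ℂ, z ^ 2 + β * z + γ = 0 → z.re < 0 ∧ -β - z.re < 0 := fun z hz =>
    ⟨h z hz, by simpa using h (-β - z) (by linear_combination hz)⟩
  obtain ⟨δ, hδ⟩ := IsAlgClosed.exists_pow_nat_eq ((β : ℂ) ^ 2 - 4 * γ) two_pos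
  have hβ : 0 < β := by
    obtain ⟨h₁, h₂⟩ := hpair ((-β + δ) / 2) (by linear_combination hδ / 4)
    linarith
  refine ⟨hβ, ?_⟩
  rcases lt_or_ge (β ^ 2 - 4 * γ) 0 with hdisc | hdisc
  · nlinarith [sq_nonneg β]
  · set r := (-β + √(β ^ 2 - 4 * γ)) / 2
    have hr : r ^ 2 + β * r + γ = 0 := by linear_combination Real.sq_sqrt hdisc / 4
    obtain ⟨h₁, h₂⟩ := hpair r (by exact_mod_cast hr)
    simp only [Complex.ofReal_re] at h₁ h₂
    nlinarith [mul_pos_of_neg_of_neg h₁ h₂]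

lemma cubic_routh_hurwitz_of_forall_root_re_neg (b c d : ℝ)
    (h : ∀ z : ℂ, z ^ 3 + b * z ^ 2 + c * z + d = 0 → z.re < 0) : 0 < b ∧ d < b * c := by
  obtain ⟨r, hr⟩ := exists_cubic_eq_zero b c d
  have hr₀ : r < 0 := by simpa using h r (by exact_mod_cast hr)
  have hfactor : ∀ z : ℂ, z ^ 3 + b * z ^ 2 + c * z + d
      = (z - r) * (z ^ 2 + ((b + r : ℝ) : ℂ) * z + ((c + b * r + r ^ 2 : ℝ) : ℂ)) := by
    have hd : (d : ℂ) = -(r * (c + b * r + r ^ 2)) := by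
      exact_mod_cast (by linear_combination hr : d = -(r * (c + b * r + r ^ 2)))
    intro z
    push_cast
    linear_combination hd
  obtain ⟨hβ, hγ⟩ := quadratic_coeffs_pos_of_forall_root_re_neg (b + r) (c + b * r + r ^ 2)
    fun z hz => h z (by rw [hfactor, hz, mul_zero])
  have hc : 0 < c + r ^ 2 := by nlinarith [mul_pos hβ (neg_pos.2 hr₀)]
  exact ⟨by linarith, by nlinarith [mul_pos hβ hc]⟩

lemma Matrix.mem_spectrum_of_mulVec_eq_smul {K n : Type*} [Field K] [Fintype n] [DecidableEq n]
    {A : Matrix n n K} {v : n → K} {μ : K} (hv : v ≠ 0) (h : A *ᵥ v = μ • v) :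
    μ ∈ spectrum K A := by
  rw [← Matrix.spectrum_toLin']
  exact Module.End.HasEigenvalue.mem_spectrum
    (Module.End.hasEigenvalue_of_hasEigenvector ⟨Module.End.mem_eigenspace_iff.mpr h, hv⟩)

lemma thirdA_map_mulVec_eq_smul {N : ℕ} (a₀ a₁ a₂ : ℝ) {L : Matrix (Fin N) (Fin N) ℝ}
    {lam : ℝ} {u : Fin N → ℝ} (hu : L *ᵥ u = lam • u) {s : ℂ}
    (hs : s ^ 3 + ↑(a₂ * lam) * s ^ 2 + ↑(a₁ * lam) * s + ↑(a₀ * lam) = 0) :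
    (thirdA a₀ a₁ a₂ L).map (Complex.ofReal ·) *ᵥ (fun p => s ^ (p.1 : ℕ) * u p.2)
      = s • fun p => s ^ (p.1 : ℕ) * u p.2 := by
  have huC : ∀ j, ∑ l, (L j l : ℂ) * u l = lam * u j := fun j => by
    exact_mod_cast congrFun hu j
  ext ⟨i, j⟩
  fin_cases i <;>
    simp [Matrix.mulVec, dotProduct, Fintype.sum_prod_type, Fin.sum_univ_three, thirdA, ite_mul,
      Finset.sum_ite_eq, apply_ite (Complex.ofReal ·)]
  · ring
  · have hsum : ∀ c t : ℂ, ∑ l, c * (L j l : ℂ) * (t * u l) = c * t * (lam * u j) := by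
      intro c t
      rw [← huC, Finset.mul_sum]
      exact Finset.sum_congr rfl fun l _ => by ring
    have h₀ : ∑ l, (a₀ : ℂ) * (L j l : ℂ) * u l = a₀ * (lam * u j) := by
      simpa using hsum a₀ 1
    rw [h₀, hsum, hsum]
    push_cast at hs
    linear_combination (-(u j : ℂ)) * hs

lemma mem_spectrum_thirdA_map {N : ℕ} (a₀ a₁ a₂ : ℝ) {L : Matrix (Fin N) (Fin N) ℝ}
    {lam : ℝ} {u : Fin N → ℝ} (hu₀ : u ≠ 0) (hu : L *ᵥ u = lam • u) {s : ℂ}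
    (hs : s ^ 3 + ↑(a₂ * lam) * s ^ 2 + ↑(a₁ * lam) * s + ↑(a₀ * lam) = 0) :
    s ∈ spectrum ℂ ((thirdA a₀ a₁ a₂ L).map (Complex.ofReal ·)) := by
  refine Matrix.mem_spectrum_of_mulVec_eq_smul ?_ (thirdA_map_mulVec_eq_smul a₀ a₁ a₂ hu hs)
  obtain ⟨j, hj⟩ := Function.ne_iff.mp hu₀
  exact Function.ne_iff.mpr ⟨(0, j), by simpa using hj⟩

lemma sortedEig_zero_le {N : ℕ} {L : Matrix (Fin N) (Fin N) ℝ} (hL : L.IsHermitian)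
    (hN : 0 < N) (i : Fin N) : sortedEig hL ⟨0, hN⟩ ≤ hL.eigenvalues i := by
  have : hL.eigenvalues i = sortedEig hL ((Tuple.sort hL.eigenvalues).symm i) := by
    simp [sortedEig]
  rw [this]
  exact Tuple.monotone_sort hL.eigenvalues (Nat.zero_le _)

lemma exists_mulVec_eq_sortedEig_smul {N : ℕ} {L : Matrix (Fin N) (Fin N) ℝ}
    (hL : L.IsHermitian) (k : Fin N) : ∃ u ≠ 0, L *ᵥ u = sortedEig hL k • u := by
  refine ⟨hL.eigenvectorBasis (Tuple.sort hL.eigenvalues k), ?_, hL.mulVec_eigenvectorBasis _⟩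
  simpa using hL.eigenvectorBasis.orthonormal.ne_zero (Tuple.sort hL.eigenvalues k)

lemma Matrix.IsHermitian.mul_dotProduct_self_le {n : Type*} [Fintype n] [DecidableEq n]
    {A : Matrix n n ℝ} (hA : A.IsHermitian) {c : ℝ} (hc : ∀ i, c ≤ hA.eigenvalues i)
    (x : n → ℝ) : c * (x ⬝ᵥ x) ≤ x ⬝ᵥ (A *ᵥ x) := by
  have hB : (A - algebraMap ℝ _ c).IsHermitian := hA.sub (by
    rw [Matrix.algebraMap_eq_diagonal]; exact Matrix.isHermitian_diagonal _)
  have hpsd : (A - algebraMap ℝ _ c).PosSemidef := by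
    rw [hB.posSemidef_iff_eigenvalues_nonneg]
    intro i
    have hmem := hB.eigenvalues_mem_spectrum_real i
    rw [← spectrum.sub_singleton_eq, hA.spectrum_real_eq_range_eigenvalues] at hmem
    obtain ⟨_, ⟨j, rfl⟩, _, rfl, hj⟩ := hmem
    simpa [← hj] using hc j
  simpa [Matrix.sub_mulVec, dotProduct_sub, Algebra.algebraMap_eq_smul_one, Matrix.smul_mulVec,
    dotProduct_smul] using hpsd.dotProduct_mulVec_nonneg x

lemma sum_lap_apply {N : ℕ} (w : Fin N → Fin N → ℝ) (i : Fin N) : ∑ k, lap w i k = w i i := by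
  have : ∀ k, lap w i k = (if i = k then ∑ l, w i l + w i k else 0) - w i k := fun k => by
    by_cases h : i = k <;> simp [lap, h]
  simp [this, Finset.sum_sub_distrib]

lemma sum_lap_submatrix_succ_apply {M : ℕ} (w : Fin (M + 1) → Fin (M + 1) → ℝ) (i : Fin M) :
    ∑ j, (lap w).submatrix Fin.succ Fin.succ i j = w i.succ i.succ + w i.succ 0 := by
  have := sum_lap_apply w i.succ
  rw [Fin.sum_univ_succ] at this
  simp only [lap, of_apply, Fin.succ_ne_zero, ↓reduceIte, Fin.succ_inj, submatrix_apply] at this ⊢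
  linarith

lemma sortedEig_lap_submatrix_succ_mul_le {M : ℕ} (hM : 0 < M) {w : Fin (M + 1) → Fin (M + 1) → ℝ}
    (hsym : ∀ i j, w i j = w j i) (hdiag : ∀ i, w i i = 0)
    (hL : ((lap w).submatrix Fin.succ Fin.succ).IsHermitian) :
    sortedEig hL ⟨0, hM⟩ * M ≤ ∑ k, w 0 k := by
  -- Test with the all-ones vector: row `i` of the grounded Laplacian sums to `w i.succ 0`.
  have hray := hL.mul_dotProduct_self_le (sortedEig_zero_le hL hM) fun _ => 1
  have hform : (fun _ => 1) ⬝ᵥ ((lap w).submatrix Fin.succ Fin.succ *ᵥ fun _ => 1)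
      = ∑ k, w 0 k := by
    simp only [dotProduct, mulVec, mul_one, one_mul, sum_lap_submatrix_succ_apply, hdiag, zero_add]
    rw [Fin.sum_univ_succ, hdiag, zero_add]
    exact Finset.sum_congr rfl fun i _ => hsym _ _
  rw [hform] at hray
  simpa [dotProduct] using hray

lemma sum_le_mul_of_card_support_le {ι : Type*} [Fintype ι] {f : ι → ℝ} {C : ℝ} {q : ℕ}
    (hC : 0 ≤ C) (hf : ∀ i, f i ≤ C) (hq : (Finset.univ.filter fun i => f i ≠ 0).card ≤ q) :
    ∑ i, f i ≤ q * C :=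
  calc ∑ i, f i = ∑ i ∈ Finset.univ.filter fun i => f i ≠ 0, f i :=
        (Finset.sum_filter_ne_zero _).symm
    _ ≤ (Finset.univ.filter fun i => f i ≠ 0).card * C := by
        simpa using Finset.sum_le_card_nsmul _ _ _ fun i _ => hf i
    _ ≤ q * C := by gcongr

lemma div_lt_of_thirdA_stable {N : ℕ} {a₀ a₁ a₂ : ℝ} (ha₁ : 0 < a₁) (ha₂ : 0 < a₂)
    {L : Matrix (Fin N) (Fin N) ℝ} {lam : ℝ} {u : Fin N → ℝ} (hu₀ : u ≠ 0)
    (hu : L *ᵥ u = lam • u)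
    (hstab : ∀ s ∈ spectrum ℂ ((thirdA a₀ a₁ a₂ L).map (Complex.ofReal ·)), s.re < 0) :
    a₀ / (a₁ * a₂) < lam := by
  obtain ⟨hpos, hrh⟩ := cubic_routh_hurwitz_of_forall_root_re_neg (a₂ * lam) (a₁ * lam) (a₀ * lam)
    fun s hs => hstab s (mem_spectrum_thirdA_map a₀ a₁ a₂ hu₀ hu hs)
  have hlam : 0 < lam := pos_of_mul_pos_right hpos ha₂.le
  rw [div_lt_iff₀ (mul_pos ha₁ ha₂)]
  nlinarith

theorem stmt15_general {M q : ℕ} (hM : 1 ≤ M) (wmax : ℝ)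
    (w : Fin (M + 1) → Fin (M + 1) → ℝ)
    (hsym : ∀ i j, w i j = w j i)
    (hdiag : ∀ i, w i i = 0)
    (hwmax : ∀ i j, w i j ≤ wmax)
    (hdeg : ∀ i, (Finset.univ.filter fun j => w i j ≠ 0).card ≤ q)
    (hHg : ((lap w).submatrix Fin.succ Fin.succ).IsHermitian)
    (a₀ a₁ a₂ : ℝ) (ha₀ : 0 < a₀) (ha₁ : 0 < a₁) (ha₂ : 0 < a₂) :
    ((∀ s ∈ spectrum ℂ
        ((thirdA a₀ a₁ a₂ ((lap w).submatrix Fin.succ Fin.succ)).map (Complex.ofReal ·)),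
        s.re < 0) →
      a₀ / (a₁ * a₂) < sortedEig hHg ⟨0, hM⟩) ∧
    (((M : ℝ) + 1 > 1 + (q : ℝ) * wmax * a₁ * a₂ / a₀) →
      ¬ (∀ s ∈ spectrum ℂ
          ((thirdA a₀ a₁ a₂ ((lap w).submatrix Fin.succ Fin.succ)).map (Complex.ofReal ·)),
          s.re < 0)) := by
  have hstable : (∀ s ∈ spectrum ℂ
      ((thirdA a₀ a₁ a₂ ((lap w).submatrix Fin.succ Fin.succ)).map (Complex.ofReal ·)),
      s.re < 0) → a₀ / (a₁ * a₂) < sortedEig hHg ⟨0, hM⟩ := fun hstab => by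
    obtain ⟨u, hu₀, hu⟩ := exists_mulVec_eq_sortedEig_smul hHg ⟨0, hM⟩
    exact div_lt_of_thirdA_stable ha₁ ha₂ hu₀ hu hstab
  refine ⟨hstable, fun hN hstab => ?_⟩
  have hlt := hstable hstab
  have hle : sortedEig hHg ⟨0, hM⟩ * M ≤ q * wmax :=
    (sortedEig_lap_submatrix_succ_mul_le hM hsym hdiag hHg).trans
      (sum_le_mul_of_card_support_le (hdiag 0 ▸ hwmax 0 0) (hwmax 0) (hdeg 0))
  rw [div_lt_iff₀ (mul_pos ha₁ ha₂)] at hlt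
  have hN' : q * wmax * a₁ * a₂ < M * a₀ := by
    rw [← div_lt_iff₀ ha₀]; linarith
  have hM₀ : (0 : ℝ) < M := by exact_mod_cast hM
  nlinarith [mul_lt_mul_of_pos_left hlt hM₀, mul_le_mul_of_nonneg_right hle (mul_pos ha₁ ha₂).le]

/-- Grounded third-order consensus over a connected bounded-degree graph on
N = M + 1 vertices (degrees ≤ q, weights ≤ w_max, vertex 0 grounded):
stability requires λ̄₁ > a₀/(a₁a₂), and since λ̄₁ ≤ q·w_max/(N−1), the
grounded system is unstable whenever N > 1 + q·w_max·a₁a₂/a₀. -/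
theorem stmt15 {M q : ℕ} (hM : 1 ≤ M) (wmax : ℝ)
    (w : Fin (M + 1) → Fin (M + 1) → ℝ)
    (hsym : ∀ i j, w i j = w j i) (hnn : ∀ i j, 0 ≤ w i j)
    (hdiag : ∀ i, w i i = 0)
    (hwmax : ∀ i j, w i j ≤ wmax)
    (hdeg : ∀ i, (Finset.univ.filter fun j => w i j ≠ 0).card ≤ q)
    (hconn : (⟨fun i j => i ≠ j ∧ w i j ≠ 0,
        ⟨fun i j h => ⟨h.1.symm, fun hz => h.2 ((hsym i j).trans hz)⟩⟩,
        ⟨fun i h => h.1 rfl⟩⟩ : SimpleGraph (Fin (M + 1))).Connected)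
    (hHg : ((lap w).submatrix Fin.succ Fin.succ).IsHermitian)
    (a₀ a₁ a₂ : ℝ) (ha₀ : 0 < a₀) (ha₁ : 0 < a₁) (ha₂ : 0 < a₂) :
    ((∀ s ∈ spectrum ℂ
        ((thirdA a₀ a₁ a₂ ((lap w).submatrix Fin.succ Fin.succ)).map (Complex.ofReal ·)),
        s.re < 0) →
      a₀ / (a₁ * a₂) < sortedEig hHg ⟨0, hM⟩) ∧
    (((M : ℝ) + 1 > 1 + (q : ℝ) * wmax * a₁ * a₂ / a₀) →
      ¬ (∀ s ∈ spectrum ℂ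
          ((thirdA a₀ a₁ a₂ ((lap w).submatrix Fin.succ Fin.succ)).map (Complex.ofReal ·)),
          s.re < 0)) :=
  stmt15_general hM wmax w hsym hdiag hwmax hdeg hHg a₀ a₁ a₂ ha₀ ha₁ ha₂
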